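/- Smoothing preserves the one-component ascending property (auxiliary claim in the proof of the Lemma of Section 5.1): Let G be a one-circle based Gauss diagram with n ≥ 2 arrows which is one-component and ascending, and let x be any arrow of G. Then the smoothing of G along x is a two-circle based Gauss diagram (with n−1 arrows) which is again one-component and ascending; in particular each of the two resulting circles carries at least one endpoint. -/

import Mathlib

open Finset

/-- The cyclic successor on `Fin m`. -/
def cycSucc {m : ℕ} (x : Fin m) : Fin m :=
  ⟨((x : ℕ) + 1) % m, Nat.mod_lt _ x.pos⟩

/-- A based Gauss diagram on one circle with `n` arrows: the `2n` endpoint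
positions are read counterclockwise starting just after the base point;
`t i` is the tail and `h i` the head of arrow `i`, all endpoints are pairwise
distinct, and `ε i ∈ {1, -1}` is the sign of arrow `i`. -/
structure GaussDiagram (n : ℕ) where
  t : Fin n → Fin (2 * n)
  h : Fin n → Fin (2 * n)
  inj : Function.Injective (Sum.elim t h)
  ε : Fin n → ℤ
  sign : ∀ i, ε i = 1 ∨ ε i = -1

namespace GaussDiagram

variable {n : ℕ}

/-- The bijection between arrow-ends and endpoint positions. -/
noncomputable def ends (G : GaussDiagram n) : (Fin n ⊕ Fin n) ≃ Fin (2 * n) :=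
  Equiv.ofBijective (Sum.elim G.t G.h)
    ((Fintype.bijective_iff_injective_and_card _).mpr ⟨G.inj, by simp [two_mul]⟩)

/-- The involution `μ` exchanging the tail and the head of each arrow. -/
noncomputable def mu (G : GaussDiagram n) (x : Fin (2 * n)) : Fin (2 * n) :=
  G.ends (Sum.swap (G.ends.symm x))

/-- `σ x = μ x + 1 (mod 2n)`. -/
noncomputable def sigma (G : GaussDiagram n) (x : Fin (2 * n)) : Fin (2 * n) :=
  ⟨((G.mu x : ℕ) + 1) % (2 * n), Nat.mod_lt _ x.pos⟩

/-- `G` is one-component iff `σ` is a single cycle of length `2n`,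
i.e. the `σ`-orbit of any position is everything. -/
def OneComponent (G : GaussDiagram n) : Prop :=
  ∀ x y : Fin (2 * n), ∃ k : ℕ, (G.sigma)^[k] x = y

open Classical in
/-- The visit time of a position: the least `k` with `σ^[k] 0 = x`
(junk value `0` if there is none). -/
noncomputable def tau (G : GaussDiagram n) (x : Fin (2 * n)) : ℕ :=
  if hx : ∃ k : ℕ, (G.sigma)^[k] ⟨0, x.pos⟩ = x then Nat.find hx else 0

/-- `G` is ascending iff for every arrow the tail is visited before the head. -/
def Ascending (G : GaussDiagram n) : Prop :=
  ∀ i : Fin n, G.tau (G.t i) < G.tau (G.h i)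

lemma t_injective (G : GaussDiagram n) : Function.Injective G.t := fun i j hij => by
  have := @G.inj (Sum.inl i) (Sum.inl j) hij
  simpa using this

lemma h_injective (G : GaussDiagram n) : Function.Injective G.h := fun i j hij => by
  have := @G.inj (Sum.inr i) (Sum.inr j) hij
  simpa using this

lemma t_ne_h (G : GaussDiagram n) (i j : Fin n) : G.t i ≠ G.h j := fun e => by
  have := @G.inj (Sum.inl i) (Sum.inr j) e
  simp at this

/-- The set of endpoint positions of the arrows in `S`. -/
def posSet (G : GaussDiagram n) (S : Finset (Fin n)) : Finset (Fin (2 * n)) :=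
  S.image G.t ∪ S.image G.h

lemma posSet_card (G : GaussDiagram n) (S : Finset (Fin n)) :
    (G.posSet S).card = 2 * S.card := by
  rw [posSet, card_union_of_disjoint, card_image_of_injective _ G.t_injective,
    card_image_of_injective _ G.h_injective, two_mul]
  rw [disjoint_left]
  rintro a ha hb
  simp only [mem_image] at ha hb
  obtain ⟨i, -, rfl⟩ := ha
  obtain ⟨j, -, hj⟩ := hb
  exact G.t_ne_h i j hj.symm

lemma mem_posSet_t (G : GaussDiagram n) {S : Finset (Fin n)} {i : Fin n} (hi : i ∈ S) :
    G.t i ∈ G.posSet S := mem_union_left _ (mem_image_of_mem _ hi)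

lemma mem_posSet_h (G : GaussDiagram n) {S : Finset (Fin n)} {i : Fin n} (hi : i ∈ S) :
    G.h i ∈ G.posSet S := mem_union_right _ (mem_image_of_mem _ hi)

/-- The sub-diagram consisting of the arrows of `S` alone, with the endpoint
positions renumbered preserving their order. -/
noncomputable def sub (G : GaussDiagram n) (S : Finset (Fin n)) : GaussDiagram S.card where
  t j := ((G.posSet S).orderIsoOfFin (G.posSet_card S)).symm
    ⟨G.t (S.orderIsoOfFin rfl j), G.mem_posSet_t (S.orderIsoOfFin rfl j).2⟩
  h j := ((G.posSet S).orderIsoOfFin (G.posSet_card S)).symm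
    ⟨G.h (S.orderIsoOfFin rfl j), G.mem_posSet_h (S.orderIsoOfFin rfl j).2⟩
  ε j := G.ε (S.orderIsoOfFin rfl j)
  sign j := G.sign _
  inj := by
    have hP : Function.Injective ((G.posSet S).orderIsoOfFin (G.posSet_card S)).symm :=
      (OrderIso.injective _)
    have hA : Function.Injective (S.orderIsoOfFin rfl) := OrderIso.injective _
    rintro (i | i) (j | j) hij <;> simp only [Sum.elim_inl, Sum.elim_inr] at hij <;>
      have h1 := congrArg Subtype.val (hP hij)
    · have h2 := @G.inj (Sum.inl (S.orderIsoOfFin rfl i))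
        (Sum.inl (S.orderIsoOfFin rfl j)) h1
      simp only [Sum.inl.injEq] at h2
      exact congrArg Sum.inl (hA (Subtype.ext h2))
    · have h2 := @G.inj (Sum.inl (S.orderIsoOfFin rfl i))
        (Sum.inr (S.orderIsoOfFin rfl j)) h1
      simp at h2
    · have h2 := @G.inj (Sum.inr (S.orderIsoOfFin rfl i))
        (Sum.inl (S.orderIsoOfFin rfl j)) h1
      simp at h2
    · have h2 := @G.inj (Sum.inr (S.orderIsoOfFin rfl i))
        (Sum.inr (S.orderIsoOfFin rfl j)) h1
      simp only [Sum.inr.injEq] at h2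
      exact congrArg Sum.inr (hA (Subtype.ext h2))

/-- A subset `S` of the arrows is one-component if the sub-diagram on `S` is. -/
def OneComponentSub (G : GaussDiagram n) (S : Finset (Fin n)) : Prop :=
  (G.sub S).OneComponent

/-- A subset `S` of the arrows is ascending if the sub-diagram on `S` is. -/
def AscendingSub (G : GaussDiagram n) (S : Finset (Fin n)) : Prop :=
  (G.sub S).Ascending

open Classical in
/-- `F k G` is the sum over all one-component ascending subsets `S` of the
arrows with `|S| = k` of the product of the signs of the arrows in `S`. -/
noncomputable def F (G : GaussDiagram n) (k : ℕ) : ℤ :=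
  ∑ S : Finset (Fin n),
    if S.card = k ∧ G.OneComponentSub S ∧ G.AscendingSub S then ∏ i ∈ S, G.ε i else 0

end GaussDiagram

/-- A based Gauss diagram on two circles with `n` arrows and endpoint
distribution `(p, q)`: `p` endpoint positions on the first (based) circle and
`q` on the second, with `p + q = 2n`; `t i` is the tail and `h i` the head of
arrow `i`, all endpoints occur exactly once, and `ε i ∈ {1, -1}`. -/
structure GaussDiagram2 (n p q : ℕ) where
  hpq : p + q = 2 * n
  t : Fin n → Fin p ⊕ Fin q
  h : Fin n → Fin p ⊕ Fin q
  inj : Function.Injective (Sum.elim t h)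
  ε : Fin n → ℤ
  sign : ∀ i, ε i = 1 ∨ ε i = -1

namespace GaussDiagram2

variable {n p q : ℕ}

/-- The bijection between arrow-ends and endpoint positions. -/
noncomputable def ends (G : GaussDiagram2 n p q) : (Fin n ⊕ Fin n) ≃ (Fin p ⊕ Fin q) :=
  Equiv.ofBijective (Sum.elim G.t G.h)
    ((Fintype.bijective_iff_injective_and_card _).mpr ⟨G.inj, by
      have := G.hpq; simp only [Fintype.card_sum, Fintype.card_fin]; omega⟩)

/-- The involution `μ` exchanging the tail and the head of each arrow. -/
noncomputable def mu (G : GaussDiagram2 n p q) (x : Fin p ⊕ Fin q) : Fin p ⊕ Fin q :=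
  G.ends (Sum.swap (G.ends.symm x))

/-- `σ x` is the cyclic successor, within its own circle, of `μ x`. -/
noncomputable def sigma (G : GaussDiagram2 n p q) (x : Fin p ⊕ Fin q) : Fin p ⊕ Fin q :=
  Sum.map cycSucc cycSucc (G.mu x)

/-- `G` is one-component iff both circles carry endpoints and `σ` is a single
cycle of length `p + q`. -/
def OneComponent (G : GaussDiagram2 n p q) : Prop :=
  1 ≤ p ∧ 1 ≤ q ∧ ∀ x y : Fin p ⊕ Fin q, ∃ k : ℕ, (G.sigma)^[k] x = y

open Classical in
/-- The visit time of a position: the least `k` with `σ^[k] (inl 0) = x`,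
iterating from position `0` of the first (based) circle
(junk value `0` if there is none or if `p = 0`). -/
noncomputable def tau (G : GaussDiagram2 n p q) (x : Fin p ⊕ Fin q) : ℕ :=
  if hp : 0 < p then
    (if hx : ∃ k : ℕ, (G.sigma)^[k] (Sum.inl ⟨0, hp⟩) = x then Nat.find hx else 0)
  else 0

/-- `G` is ascending iff for every arrow the tail is visited before the head. -/
def Ascending (G : GaussDiagram2 n p q) : Prop :=
  ∀ i : Fin n, G.tau (G.t i) < G.tau (G.h i)

lemma t_injective (G : GaussDiagram2 n p q) : Function.Injective G.t := fun i j hij => by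
  have := @G.inj (Sum.inl i) (Sum.inl j) hij
  simpa using this

lemma h_injective (G : GaussDiagram2 n p q) : Function.Injective G.h := fun i j hij => by
  have := @G.inj (Sum.inr i) (Sum.inr j) hij
  simpa using this

lemma t_ne_h (G : GaussDiagram2 n p q) (i j : Fin n) : G.t i ≠ G.h j := fun e => by
  have := @G.inj (Sum.inl i) (Sum.inr j) e
  simp at this

/-- The set of endpoint positions of the arrows in `S`. -/
def posSet (G : GaussDiagram2 n p q) (S : Finset (Fin n)) : Finset (Fin p ⊕ Fin q) :=
  S.image G.t ∪ S.image G.h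

lemma posSet_card (G : GaussDiagram2 n p q) (S : Finset (Fin n)) :
    (G.posSet S).card = 2 * S.card := by
  rw [posSet, card_union_of_disjoint, card_image_of_injective _ G.t_injective,
    card_image_of_injective _ G.h_injective, two_mul]
  rw [disjoint_left]
  rintro a ha hb
  simp only [mem_image] at ha hb
  obtain ⟨i, -, rfl⟩ := ha
  obtain ⟨j, -, hj⟩ := hb
  exact G.t_ne_h i j hj.symm

lemma mem_posSet_t (G : GaussDiagram2 n p q) {S : Finset (Fin n)} {i : Fin n} (hi : i ∈ S) :
    G.t i ∈ G.posSet S := mem_union_left _ (mem_image_of_mem _ hi)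

lemma mem_posSet_h (G : GaussDiagram2 n p q) {S : Finset (Fin n)} {i : Fin n} (hi : i ∈ S) :
    G.h i ∈ G.posSet S := mem_union_right _ (mem_image_of_mem _ hi)

/-- Order preserving renumbering of the endpoint positions in `E` on each circle. -/
noncomputable def renum (E : Finset (Fin p ⊕ Fin q)) :
    ∀ x ∈ E, Fin E.toLeft.card ⊕ Fin E.toRight.card
  | Sum.inl a, hx => Sum.inl ((E.toLeft.orderIsoOfFin rfl).symm ⟨a, mem_toLeft.mpr hx⟩)
  | Sum.inr b, hx => Sum.inr ((E.toRight.orderIsoOfFin rfl).symm ⟨b, mem_toRight.mpr hx⟩)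

lemma renum_inj (E : Finset (Fin p ⊕ Fin q)) {x y : Fin p ⊕ Fin q} (hx : x ∈ E) (hy : y ∈ E)
    (hxy : renum E x hx = renum E y hy) : x = y := by
  rcases x with a | a <;> rcases y with b | b <;>
    simp only [renum, Sum.inl.injEq, Sum.inr.injEq, reduceCtorEq] at hxy
  · have := congrArg Subtype.val ((OrderIso.injective _) hxy)
    exact congrArg Sum.inl this
  · have := congrArg Subtype.val ((OrderIso.injective _) hxy)
    exact congrArg Sum.inr this

/-- The sub-diagram consisting of the arrows of `S` alone, with the endpoint
positions on each circle renumbered preserving their order. -/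
noncomputable def sub (G : GaussDiagram2 n p q) (S : Finset (Fin n)) :
    GaussDiagram2 S.card (G.posSet S).toLeft.card (G.posSet S).toRight.card where
  hpq := by rw [card_toLeft_add_card_toRight, G.posSet_card]
  t j := renum (G.posSet S) (G.t (S.orderIsoOfFin rfl j))
    (G.mem_posSet_t (S.orderIsoOfFin rfl j).2)
  h j := renum (G.posSet S) (G.h (S.orderIsoOfFin rfl j))
    (G.mem_posSet_h (S.orderIsoOfFin rfl j).2)
  ε j := G.ε (S.orderIsoOfFin rfl j)
  sign j := G.sign _
  inj := by
    have hA : Function.Injective (S.orderIsoOfFin rfl) := OrderIso.injective _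
    rintro (i | i) (j | j) hij <;> simp only [Sum.elim_inl, Sum.elim_inr] at hij <;>
      have h1 := renum_inj _ _ _ hij
    · have h2 := @G.inj (Sum.inl (S.orderIsoOfFin rfl i))
        (Sum.inl (S.orderIsoOfFin rfl j)) h1
      simp only [Sum.inl.injEq] at h2
      exact congrArg Sum.inl (hA (Subtype.ext h2))
    · have h2 := @G.inj (Sum.inl (S.orderIsoOfFin rfl i))
        (Sum.inr (S.orderIsoOfFin rfl j)) h1
      simp at h2
    · have h2 := @G.inj (Sum.inr (S.orderIsoOfFin rfl i))
        (Sum.inl (S.orderIsoOfFin rfl j)) h1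
      simp at h2
    · have h2 := @G.inj (Sum.inr (S.orderIsoOfFin rfl i))
        (Sum.inr (S.orderIsoOfFin rfl j)) h1
      simp only [Sum.inr.injEq] at h2
      exact congrArg Sum.inr (hA (Subtype.ext h2))

/-- A subset `S` of the arrows is one-component if the sub-diagram on `S` is. -/
def OneComponentSub (G : GaussDiagram2 n p q) (S : Finset (Fin n)) : Prop :=
  (G.sub S).OneComponent

/-- A subset `S` of the arrows is ascending if the sub-diagram on `S` is. -/
def AscendingSub (G : GaussDiagram2 n p q) (S : Finset (Fin n)) : Prop :=
  (G.sub S).Ascending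

open Classical in
/-- `F k G` is the sum over all one-component ascending subsets `S` of the
arrows with `|S| = k` of the product of the signs of the arrows in `S`. -/
noncomputable def F (G : GaussDiagram2 n p q) (k : ℕ) : ℤ :=
  ∑ S : Finset (Fin n),
    if S.card = k ∧ G.OneComponentSub S ∧ G.AscendingSub S then ∏ i ∈ S, G.ε i else 0

end GaussDiagram2

/-- Renumbering of the endpoint positions when smoothing a one-circle diagram
along an arrow with endpoints `a < b`: positions `0, …, a-1, b+1, …, 2n-1` go,
in this order, to the first (based) circle and positions `a+1, …, b-1`, in this
cyclic order, to the second circle. -/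
def smoothPos (a b y : ℕ) : ℕ ⊕ ℕ :=
  if y < a then Sum.inl y
  else if y < b then Sum.inr (y - a - 1)
  else Sum.inl (a + (y - b - 1))

/-!
Smoothing along `x` removes the endpoints `a < b` of `x`, and on the remaining positions the
new successor map `σ'` (tail-to-head jump, then the next position on the same circle) is the
first-return map of `σ` to the complement of `{a, b}`: `σ' y` is `σ y`, or `σ (σ y)` when
`σ y ∈ {a, b}`. This uses that `σ` never stays in `{a, b}` for two steps, which holds because a
one-component `σ` has no fixed point; the same fact gives `a + 1 < b` and puts a position on the
based circle, so both circles carry endpoints. Hence the `σ'`-orbit of a remaining position lists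
the remaining positions of its `σ`-orbit in the same order, so `σ'` is again a single cycle, and
the visit time of `y` for `σ'` is the number of remaining positions that `σ` visits before `y`.
This count is strictly increasing along the `σ`-orbit at remaining positions, so tails are still
visited before heads.
-/

open Set

open Classical in
/-- Junk value `0` when the `f`-orbit of `z` never reaches `y`. -/
noncomputable def hitTime {α : Type*} (f : α → α) (z y : α) : ℕ :=
  if h : ∃ k, f^[k] z = y then Nat.find h else 0

section HitTime

variable {α β : Type*} {f : α → α} {z y : α}

lemma iterate_hitTime (h : ∃ k, f^[k] z = y) : f^[hitTime f z y] z = y := by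
  classical
  rw [hitTime, dif_pos h]
  exact Nat.find_spec h

lemma iterate_ne_of_lt_hitTime {k : ℕ} (hk : k < hitTime f z y) : f^[k] z ≠ y := by
  classical
  unfold hitTime at hk
  split_ifs at hk with h
  · exact Nat.find_min h hk
  · omega

lemma hitTime_eq {k : ℕ} (hk : f^[k] z = y) (hmin : ∀ j < k, f^[j] z ≠ y) :
    hitTime f z y = k := by
  classical
  rw [hitTime, dif_pos ⟨k, hk⟩, Nat.find_eq_iff]
  exact ⟨hk, hmin⟩

lemma iterate_apply_of_semiconjOn {s : Set α} {g : β → β} {Φ : α → β} (hf : MapsTo f s s)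
    (hconj : ∀ y ∈ s, g (Φ y) = Φ (f y)) (hz : z ∈ s) (k : ℕ) :
    g^[k] (Φ z) = Φ (f^[k] z) := by
  induction k with
  | zero => rfl
  | succ k ih =>
    rw [Function.iterate_succ_apply', Function.iterate_succ_apply', ih, hconj _ (hf.iterate k hz)]

lemma hitTime_of_semiconjOn {s : Set α} {g : β → β} {Φ : α → β} (hf : MapsTo f s s)
    (hconj : ∀ y ∈ s, g (Φ y) = Φ (f y)) (hΦ : InjOn Φ s) (hz : z ∈ s) (hy : y ∈ s) :
    hitTime g (Φ z) (Φ y) = hitTime f z y := by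
  have key : ∀ k, g^[k] (Φ z) = Φ y ↔ f^[k] z = y := fun k => by
    rw [iterate_apply_of_semiconjOn hf hconj hz, hΦ.eq_iff (hf.iterate k hz) hy]
  by_cases hreach : ∃ k, f^[k] z = y
  · exact hitTime_eq ((key _).2 (iterate_hitTime hreach))
      fun j hj => (key j).not.2 (iterate_ne_of_lt_hitTime hj)
  · have hreach' : ¬∃ k, g^[k] (Φ z) = Φ y := by simpa only [key] using hreach
    rw [hitTime, hitTime, dif_neg hreach, dif_neg hreach']

end HitTime

section FirstReturn

variable {α : Type*} (f : α → α) (s : Set α) [DecidablePred (· ∈ s)]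

/-- The first-return map of `f` to `s`, when `f` never leaves `s` twice in a row. -/
def skipMap (y : α) : α :=
  if f y ∈ s then f y else f (f y)

def visitCount (z : α) (n : ℕ) : ℕ :=
  #{j ∈ range n | f^[j] z ∈ s}

/-- The first point of the `f`-orbit of `z` in `s`, when `f` never leaves `s` twice in a row. -/
def firstVisit (z : α) : α :=
  if z ∈ s then z else f z

variable {f s} {z : α}

lemma firstVisit_of_mem (hz : z ∈ s) : firstVisit f s z = z :=
  if_pos hz

lemma visitCount_succ (n : ℕ) :
    visitCount f s z (n + 1) = visitCount f s z n + if f^[n] z ∈ s then 1 else 0 := by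
  simp only [visitCount, card_filter, sum_range_succ]

lemma visitCount_mono : Monotone (visitCount f s z) :=
  monotone_nat_of_le_succ fun n => by rw [visitCount_succ]; omega

lemma visitCount_lt_visitCount {n n' : ℕ} (hn : f^[n] z ∈ s) (hnn' : n < n') :
    visitCount f s z n < visitCount f s z n' :=
  calc visitCount f s z n < visitCount f s z (n + 1) := by rw [visitCount_succ, if_pos hn]; omega
    _ ≤ visitCount f s z n' := visitCount_mono hnn'

lemma exists_visitCount_eq {j n : ℕ} (hj : j < visitCount f s z n) :
    ∃ n' < n, f^[n'] z ∈ s ∧ visitCount f s z n' = j := by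
  induction n with
  | zero => simp [visitCount] at hj
  | succ n ih =>
    rw [visitCount_succ] at hj
    by_cases hjn : j < visitCount f s z n
    · obtain ⟨n', hn', hmem, hcount⟩ := ih hjn
      exact ⟨n', by omega, hmem, hcount⟩
    · split_ifs at hj with hn
      · exact ⟨n, by omega, hn, by omega⟩
      · omega

variable (hf : ∀ y ∉ s, f y ∈ s)
include hf

lemma mapsTo_skipMap : MapsTo (skipMap f s) s s := fun y _ => by
  unfold skipMap
  split_ifs with h
  exacts [h, hf _ h]

lemma firstVisit_mem (z : α) : firstVisit f s z ∈ s := by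
  unfold firstVisit
  split_ifs with h
  exacts [h, hf _ h]

lemma skipMap_iterate_visitCount {n : ℕ} (hn : f^[n] z ∈ s) :
    (skipMap f s)^[visitCount f s z n] (firstVisit f s z) = f^[n] z := by
  induction n using Nat.strong_induction_on with
  | _ n ih =>
    match n, hn with
    | 0, hn => simp [visitCount, firstVisit_of_mem (show z ∈ s from hn)]
    | n + 1, hn =>
      by_cases hprev : f^[n] z ∈ s
      · rw [visitCount_succ, if_pos hprev, Function.iterate_succ_apply', ih n (by omega) hprev,
          skipMap, ← Function.iterate_succ_apply' f, if_pos hn]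
      · match n, hprev with
        | 0, hprev =>
          have hz : z ∉ s := hprev
          rw [visitCount_succ, if_neg hprev]
          simp [visitCount, firstVisit, hz]
        | n + 1, hprev =>
          have hn2 : f^[n] z ∈ s := by
            by_contra h
            exact hprev (by rw [Function.iterate_succ_apply']; exact hf _ h)
          rw [visitCount_succ, if_neg hprev, visitCount_succ, if_pos hn2, add_zero,
            Function.iterate_succ_apply', ih n (by omega) hn2, skipMap,
            ← Function.iterate_succ_apply' f, if_neg hprev]
          exact (Function.iterate_succ_apply' f (n + 1) z).symm

lemma hitTime_skipMap (hy : ∃ n, f^[n] z = y) (hys : y ∈ s) :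
    hitTime (skipMap f s) (firstVisit f s z) y = visitCount f s z (hitTime f z y) := by
  have hvisit : f^[hitTime f z y] z ∈ s := by rwa [iterate_hitTime hy]
  refine hitTime_eq ?_ fun j hj => ?_
  · rw [skipMap_iterate_visitCount hf hvisit, iterate_hitTime hy]
  · obtain ⟨n', hn', hmem, rfl⟩ := exists_visitCount_eq hj
    rw [skipMap_iterate_visitCount hf hmem]
    exact iterate_ne_of_lt_hitTime hn'

end FirstReturn

lemma add_one_mod_eq_ite {k N : ℕ} (h : k < N) :
    (k + 1) % N = if k + 1 = N then 0 else k + 1 := by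
  split_ifs with hk
  · simp [hk]
  · exact Nat.mod_eq_of_lt (by omega)

section Renumbering

variable {N a b : ℕ}

def offPair (a b : ℕ) : Set (Fin N) := {y | (y : ℕ) ≠ a ∧ (y : ℕ) ≠ b}

instance (a b : ℕ) : DecidablePred (· ∈ offPair (N := N) a b) :=
  fun y => inferInstanceAs (Decidable ((y : ℕ) ≠ a ∧ (y : ℕ) ≠ b))

/-- `smoothPos` as a map into the two circles, with junk values at `a` and `b`. -/
def smoothIndex (hab : a + 1 < b) (y : Fin N) : Fin (a + (N - 1 - b)) ⊕ Fin (b - a - 1) :=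
  if hya : (y : ℕ) < a then .inl ⟨y, by omega⟩
  else if hyb : (y : ℕ) < b then .inr ⟨y - a - 1, by omega⟩
  else if hby : b < (y : ℕ) then .inl ⟨a + (y - b - 1), by omega⟩
  else .inr ⟨0, by omega⟩

/-- The successor of `y` on its circle after smoothing: the cyclic successor, except that the
arc through `a` now jumps to `b + 1` and the arc through `b` to `a + 1`. -/
def smoothSucc (a b : ℕ) (y : Fin N) : Fin N :=
  ⟨if (y + 1) % N = a then (b + 1) % N else if (y + 1) % N = b then (a + 1) % N else (y + 1) % N,
    by split_ifs <;> exact Nat.mod_lt _ y.pos⟩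

variable (hab : a + 1 < b)
include hab

lemma map_val_smoothIndex {y : Fin N} (hy : y ∈ offPair a b) :
    Sum.map Fin.val Fin.val (smoothIndex hab y) = smoothPos a b y := by
  obtain ⟨hya, hyb⟩ := hy
  unfold smoothIndex smoothPos
  split_ifs <;> first | rfl | omega

lemma smoothIndex_injOn : InjOn (smoothIndex (N := N) hab) (offPair a b) := by
  intro y ⟨hya, hyb⟩ y' ⟨hya', hyb'⟩ h
  unfold smoothIndex at h
  split_ifs at h <;> simp only [Sum.inl.injEq, Sum.inr.injEq, Fin.mk.injEq] at h <;>
    exact Fin.ext (by omega)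

lemma smoothIndex_surjOn (hb : b < N) : SurjOn (smoothIndex (N := N) hab) (offPair a b) univ := by
  rintro (⟨w, hw⟩ | ⟨w, hw⟩) -
  · by_cases hwa : w < a
    · exact ⟨⟨w, by omega⟩, show w ≠ a ∧ w ≠ b by omega, by simp [smoothIndex, hwa]⟩
    · refine ⟨⟨b + 1 + (w - a), by omega⟩, ⟨by dsimp only; omega, by dsimp only; omega⟩, ?_⟩
      rw [smoothIndex, dif_neg (by dsimp only; omega), dif_neg (by dsimp only; omega),
        dif_pos (by dsimp only; omega)]
      simp only [Sum.inl.injEq, Fin.mk.injEq]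
      omega
  · refine ⟨⟨a + 1 + w, by omega⟩, ⟨by dsimp only; omega, by dsimp only; omega⟩, ?_⟩
    rw [smoothIndex, dif_neg (by dsimp only; omega), dif_pos (by dsimp only; omega)]
    simp only [Sum.inr.injEq, Fin.mk.injEq]
    omega

lemma smoothSucc_mem_offPair (hb : b < N) {y : Fin N} (hy : y ∈ offPair a b) :
    smoothSucc a b y ∈ offPair a b := by
  obtain ⟨hya, hyb⟩ := hy
  have hyN := y.isLt
  show (smoothSucc a b y : ℕ) ≠ a ∧ (smoothSucc a b y : ℕ) ≠ b
  simp only [smoothSucc, add_one_mod_eq_ite hyN, add_one_mod_eq_ite hb,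
    add_one_mod_eq_ite (show a < N by omega)]
  constructor <;> split_ifs <;> omega

lemma smoothIndex_smoothSucc (hb : b < N) {y : Fin N} (hy : y ∈ offPair a b) :
    Sum.map cycSucc cycSucc (smoothIndex hab y) = smoothIndex hab (smoothSucc a b y) := by
  have hval : ∀ v : Fin (a + (N - 1 - b)) ⊕ Fin (b - a - 1),
      Sum.map Fin.val Fin.val (Sum.map cycSucc cycSucc v) =
        Sum.map (fun k => (k + 1) % (a + (N - 1 - b))) (fun k => (k + 1) % (b - a - 1))
          (Sum.map Fin.val Fin.val v) := by
    rintro (v | v) <;> rfl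
  apply Sum.map_injective.2 ⟨Fin.val_injective, Fin.val_injective⟩
  rw [hval, map_val_smoothIndex hab hy, map_val_smoothIndex hab (smoothSucc_mem_offPair hab hb hy)]
  obtain ⟨hya, hyb⟩ := hy
  have hyN := y.isLt
  simp only [smoothSucc, add_one_mod_eq_ite hyN, add_one_mod_eq_ite hb,
    add_one_mod_eq_ite (show a < N by omega)]
  unfold smoothPos
  split_ifs <;> simp (disch := omega) only [Sum.map_inl, Sum.map_inr, Sum.inl.injEq,
    Sum.inr.injEq, reduceCtorEq, add_one_mod_eq_ite] <;> (try split_ifs) <;> omega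

lemma smoothIndex_eq_inl_zero (hp : 0 < a + (N - 1 - b)) {y : Fin N}
    (hy : (y : ℕ) = if a = 0 then b + 1 else 0) : smoothIndex hab y = .inl ⟨0, hp⟩ := by
  unfold smoothIndex
  split_ifs at hy ⊢ <;> (try simp only [Sum.inl.injEq, Fin.mk.injEq]) <;> omega

end Renumbering

namespace GaussDiagram

variable {n : ℕ} (G : GaussDiagram n)

lemma mu_t (i : Fin n) : G.mu (G.t i) = G.h i := by
  rw [mu, show G.ends.symm (G.t i) = .inl i from G.ends.symm_apply_eq.2 rfl]
  rfl

lemma mu_h (i : Fin n) : G.mu (G.h i) = G.t i := by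
  rw [mu, show G.ends.symm (G.h i) = .inr i from G.ends.symm_apply_eq.2 rfl]
  rfl

lemma mu_mu (y : Fin (2 * n)) : G.mu (G.mu y) = y := by
  simp only [mu, Equiv.symm_apply_apply, Sum.swap_swap, Equiv.apply_symm_apply]

lemma exists_t_or_h_eq (y : Fin (2 * n)) : (∃ j, G.t j = y) ∨ ∃ j, G.h j = y := by
  obtain ⟨j | j, hj⟩ := G.ends.surjective y
  exacts [.inl ⟨j, hj⟩, .inr ⟨j, hj⟩]

lemma tau_eq_hitTime (y : Fin (2 * n)) : G.tau y = hitTime G.sigma ⟨0, y.pos⟩ y := by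
  unfold tau hitTime
  congr!

lemma OneComponent.sigma_ne_self {G : GaussDiagram n} (hG : G.OneComponent) (hn : 0 < n)
    (y : Fin (2 * n)) : G.sigma y ≠ y := by
  intro hy
  have : Nontrivial (Fin (2 * n)) := Fin.nontrivial_iff_two_le.2 (by omega)
  obtain ⟨w, hw⟩ := exists_ne y
  obtain ⟨k, hk⟩ := hG y w
  exact hw (by rw [← hk, Function.iterate_fixed hy])

end GaussDiagram

namespace GaussDiagram2

variable {n p q : ℕ} (G : GaussDiagram2 n p q)

lemma mu_t (i : Fin n) : G.mu (G.t i) = G.h i := by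
  rw [mu, show G.ends.symm (G.t i) = .inl i from G.ends.symm_apply_eq.2 rfl]
  rfl

lemma mu_h (i : Fin n) : G.mu (G.h i) = G.t i := by
  rw [mu, show G.ends.symm (G.h i) = .inr i from G.ends.symm_apply_eq.2 rfl]
  rfl

lemma tau_eq_hitTime (hp : 0 < p) (v : Fin p ⊕ Fin q) :
    G.tau v = hitTime G.sigma (.inl ⟨0, hp⟩) v := by
  rw [tau, dif_pos hp]
  unfold hitTime
  congr!

end GaussDiagram2

namespace GaussDiagram

variable {n : ℕ} (G : GaussDiagram (n + 1)) (x : Fin (n + 1))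

def lo : ℕ := min (G.t x : ℕ) (G.h x : ℕ)

def hi : ℕ := max (G.t x : ℕ) (G.h x : ℕ)

lemma t_h_eq_lo_hi :
    ((G.t x : ℕ) = G.lo x ∧ (G.h x : ℕ) = G.hi x) ∨
      ((G.t x : ℕ) = G.hi x ∧ (G.h x : ℕ) = G.lo x) := by
  unfold lo hi
  omega

lemma lo_lt_hi : G.lo x < G.hi x := by
  have := G.t_ne_h x x
  unfold lo hi
  omega

lemma hi_lt : G.hi x < 2 * (n + 1) :=
  max_lt (G.t x).isLt (G.h x).isLt

lemma val_mu_of_val_eq_lo {y : Fin (2 * (n + 1))} (hy : (y : ℕ) = G.lo x) :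
    (G.mu y : ℕ) = G.hi x := by
  rcases G.t_h_eq_lo_hi x with ⟨ht, hh⟩ | ⟨ht, hh⟩
  · rw [show y = G.t x from Fin.ext (by omega), G.mu_t, hh]
  · rw [show y = G.h x from Fin.ext (by omega), G.mu_h, ht]

lemma val_mu_of_val_eq_hi {y : Fin (2 * (n + 1))} (hy : (y : ℕ) = G.hi x) :
    (G.mu y : ℕ) = G.lo x := by
  rcases G.t_h_eq_lo_hi x with ⟨ht, hh⟩ | ⟨ht, hh⟩
  · rw [show y = G.h x from Fin.ext (by omega), G.mu_h, ht]
  · rw [show y = G.t x from Fin.ext (by omega), G.mu_t, hh]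

lemma val_sigma_of_val_eq_lo {y : Fin (2 * (n + 1))} (hy : (y : ℕ) = G.lo x) :
    (G.sigma y : ℕ) = (G.hi x + 1) % (2 * (n + 1)) := by
  rw [← G.val_mu_of_val_eq_lo x hy]
  rfl

lemma val_sigma_of_val_eq_hi {y : Fin (2 * (n + 1))} (hy : (y : ℕ) = G.hi x) :
    (G.sigma y : ℕ) = (G.lo x + 1) % (2 * (n + 1)) := by
  rw [← G.val_mu_of_val_eq_hi x hy]
  rfl

lemma val_eq_lo_or_hi {y : Fin (2 * (n + 1))} (hy : y ∉ offPair (G.lo x) (G.hi x)) :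
    (y : ℕ) = G.lo x ∨ (y : ℕ) = G.hi x := by
  by_contra h
  exact hy ⟨fun h1 => h (.inl h1), fun h2 => h (.inr h2)⟩

lemma mu_mem_offPair {y : Fin (2 * (n + 1))} (hy : y ∈ offPair (G.lo x) (G.hi x)) :
    G.mu y ∈ offPair (G.lo x) (G.hi x) := by
  obtain ⟨hlo, hhi⟩ := hy
  refine ⟨fun h => hhi ?_, fun h => hlo ?_⟩
  · rw [← G.mu_mu y, G.val_mu_of_val_eq_lo x h]
  · rw [← G.mu_mu y, G.val_mu_of_val_eq_hi x h]

lemma t_mem_offPair {j : Fin (n + 1)} (hj : j ≠ x) : G.t j ∈ offPair (G.lo x) (G.hi x) := by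
  have h1 : (G.t j : ℕ) ≠ G.t x := fun h => hj (G.t_injective (Fin.ext h))
  have h2 : (G.t j : ℕ) ≠ G.h x := fun h => G.t_ne_h j x (Fin.ext h)
  constructor <;> rcases G.t_h_eq_lo_hi x with ⟨_, _⟩ | ⟨_, _⟩ <;> omega

lemma h_mem_offPair {j : Fin (n + 1)} (hj : j ≠ x) : G.h j ∈ offPair (G.lo x) (G.hi x) := by
  have h1 : (G.h j : ℕ) ≠ G.h x := fun h => hj (G.h_injective (Fin.ext h))
  have h2 : (G.h j : ℕ) ≠ G.t x := fun h => G.t_ne_h x j (Fin.ext h).symm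
  constructor <;> rcases G.t_h_eq_lo_hi x with ⟨_, _⟩ | ⟨_, _⟩ <;> omega

lemma skipMap_sigma (y : Fin (2 * (n + 1))) :
    skipMap G.sigma (offPair (G.lo x) (G.hi x)) y = smoothSucc (G.lo x) (G.hi x) (G.mu y) := by
  have hσ : (G.sigma y : ℕ) = ((G.mu y : ℕ) + 1) % (2 * (n + 1)) := rfl
  apply Fin.ext
  rw [skipMap]
  split_ifs with h
  · obtain ⟨h1, h2⟩ := h
    rw [hσ] at h1 h2 ⊢
    simp only [smoothSucc, if_neg h1, if_neg h2]
  · rcases G.val_eq_lo_or_hi x h with h1 | h1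
    · rw [G.val_sigma_of_val_eq_lo x h1]
      rw [hσ] at h1
      simp only [smoothSucc, if_pos h1]
    · rw [G.val_sigma_of_val_eq_hi x h1]
      rw [hσ] at h1
      simp only [smoothSucc, h1, if_neg (G.lo_lt_hi x).ne', if_true]

namespace OneComponent

variable {G} (hG : G.OneComponent)
include hG

lemma lo_add_one_lt_hi : G.lo x + 1 < G.hi x := by
  have := G.lo_lt_hi x
  have hσ := G.val_sigma_of_val_eq_hi x (y := ⟨G.hi x, G.hi_lt x⟩) rfl
  rw [Nat.mod_eq_of_lt (by have := G.hi_lt x; omega)] at hσ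
  by_contra h
  exact hG.sigma_ne_self n.succ_pos _ (Fin.ext (hσ.trans (by show G.lo x + 1 = G.hi x; omega)))

lemma zero_lt_lo_add : 0 < G.lo x + (2 * (n + 1) - 1 - G.hi x) := by
  have := G.hi_lt x
  have hσ := G.val_sigma_of_val_eq_lo x (y := ⟨G.lo x, (G.lo_lt_hi x).trans (G.hi_lt x)⟩) rfl
  rw [add_one_mod_eq_ite (G.hi_lt x)] at hσ
  by_contra h
  exact hG.sigma_ne_self n.succ_pos _
    (Fin.ext (hσ.trans (by show _ = G.lo x; split_ifs <;> omega)))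

lemma sigma_mem_offPair :
    ∀ y ∉ offPair (G.lo x) (G.hi x), G.sigma y ∈ offPair (G.lo x) (G.hi x) := fun y hy => by
  have := lo_add_one_lt_hi x hG
  have := zero_lt_lo_add x hG
  have := G.hi_lt x
  show (G.sigma y : ℕ) ≠ G.lo x ∧ (G.sigma y : ℕ) ≠ G.hi x
  rcases G.val_eq_lo_or_hi x hy with h | h
  · rw [G.val_sigma_of_val_eq_lo x h, add_one_mod_eq_ite (G.hi_lt x)]
    split_ifs <;> omega
  · rw [G.val_sigma_of_val_eq_hi x h, Nat.mod_eq_of_lt (by omega)]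
    omega

end OneComponent

variable (hab : G.lo x + 1 < G.hi x)

noncomputable def smoothing :
    GaussDiagram2 n (G.lo x + (2 * (n + 1) - 1 - G.hi x)) (G.hi x - G.lo x - 1) where
  hpq := by have := G.hi_lt x; omega
  t i := smoothIndex hab (G.t (x.succAbove i))
  h i := smoothIndex hab (G.h (x.succAbove i))
  inj := by
    have hmem : ∀ u, Sum.elim G.t G.h (Sum.map x.succAbove x.succAbove u) ∈
        offPair (G.lo x) (G.hi x) := by
      rintro (i | i)
      exacts [G.t_mem_offPair x (x.succAbove_ne i), G.h_mem_offPair x (x.succAbove_ne i)]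
    intro u v huv
    refine (Sum.map_injective.2 ⟨Fin.succAbove_right_injective, Fin.succAbove_right_injective⟩)
      (G.inj (smoothIndex_injOn hab (hmem u) (hmem v) ?_))
    rcases u with u | u <;> rcases v with v | v <;> exact huv
  ε i := G.ε (x.succAbove i)
  sign i := G.sign _

lemma smoothing_mu {y : Fin (2 * (n + 1))} (hy : y ∈ offPair (G.lo x) (G.hi x)) :
    (G.smoothing x hab).mu (smoothIndex hab y) = smoothIndex hab (G.mu y) := by
  have hne : ∀ j, (G.t j = y ∨ G.h j = y) → j ≠ x := by
    rintro j hj rfl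
    obtain ⟨h1, h2⟩ := hy
    rcases hj with rfl | rfl <;> rcases G.t_h_eq_lo_hi j with ⟨_, _⟩ | ⟨_, _⟩ <;> omega
  rcases G.exists_t_or_h_eq y with ⟨j, rfl⟩ | ⟨j, rfl⟩
  · obtain ⟨i, rfl⟩ := Fin.exists_succAbove_eq (hne j (.inl rfl))
    rw [G.mu_t]
    exact (G.smoothing x hab).mu_t i
  · obtain ⟨i, rfl⟩ := Fin.exists_succAbove_eq (hne j (.inr rfl))
    rw [G.mu_h]
    exact (G.smoothing x hab).mu_h i

lemma smoothing_sigma : ∀ y ∈ offPair (G.lo x) (G.hi x),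
    (G.smoothing x hab).sigma (smoothIndex hab y) =
      smoothIndex hab (skipMap G.sigma (offPair (G.lo x) (G.hi x)) y) := fun y hy => by
  rw [GaussDiagram2.sigma, G.smoothing_mu x hab hy, skipMap_sigma,
    smoothIndex_smoothSucc hab (G.hi_lt x) (G.mu_mem_offPair x hy)]

variable {G} (hG : G.OneComponent)
include hG

lemma smoothing_tau {y : Fin (2 * (n + 1))} (hy : y ∈ offPair (G.lo x) (G.hi x)) :
    (G.smoothing x hab).tau (smoothIndex hab y) =
      visitCount G.sigma (offPair (G.lo x) (G.hi x)) ⟨0, by omega⟩ (G.tau y) := by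
  have hf := hG.sigma_mem_offPair x
  have hp := hG.zero_lt_lo_add x
  -- the base point of the smoothed diagram: `0`, or `σ 0 = b + 1` when `a = 0`
  have hbase : smoothIndex hab (firstVisit G.sigma (offPair (G.lo x) (G.hi x)) ⟨0, by omega⟩) =
      .inl ⟨0, hp⟩ := by
    apply smoothIndex_eq_inl_zero
    unfold firstVisit
    by_cases h0 : G.lo x = 0
    · rw [if_neg fun h => h.1 h0.symm, G.val_sigma_of_val_eq_lo x h0.symm,
        Nat.mod_eq_of_lt (by omega), if_pos h0]
    · rw [if_pos ⟨Ne.symm h0, by show 0 ≠ G.hi x; have := G.lo_lt_hi x; omega⟩, if_neg h0]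
  rw [GaussDiagram2.tau_eq_hitTime _ hp, ← hbase,
    hitTime_of_semiconjOn (mapsTo_skipMap hf) (G.smoothing_sigma x hab)
      (smoothIndex_injOn hab) (firstVisit_mem hf _) hy,
    hitTime_skipMap hf (hG _ y) hy, G.tau_eq_hitTime]

theorem smoothing_oneComponent : (G.smoothing x hab).OneComponent := by
  have hf := hG.sigma_mem_offPair x
  refine ⟨hG.zero_lt_lo_add x, by omega, fun v w => ?_⟩
  obtain ⟨y, hy, rfl⟩ := smoothIndex_surjOn hab (G.hi_lt x) (mem_univ v)
  obtain ⟨y', hy', rfl⟩ := smoothIndex_surjOn hab (G.hi_lt x) (mem_univ w)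
  obtain ⟨k, rfl⟩ := hG y y'
  refine ⟨visitCount G.sigma (offPair (G.lo x) (G.hi x)) y k, ?_⟩
  rw [iterate_apply_of_semiconjOn (mapsTo_skipMap hf)
    (G.smoothing_sigma x hab) hy, ← skipMap_iterate_visitCount hf hy', firstVisit_of_mem hy]

theorem smoothing_ascending (hA : G.Ascending) : (G.smoothing x hab).Ascending := by
  intro i
  have ht := G.t_mem_offPair x (x.succAbove_ne i)
  have hh := G.h_mem_offPair x (x.succAbove_ne i)
  change (G.smoothing x hab).tau (smoothIndex hab _) < (G.smoothing x hab).tau (smoothIndex hab _)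
  rw [smoothing_tau x hab hG ht, smoothing_tau x hab hG hh]
  refine visitCount_lt_visitCount ?_ (hA _)
  rw [G.tau_eq_hitTime, iterate_hitTime (hG _ _)]
  exact ht

end GaussDiagram

theorem smoothing_oneComponent_ascending {m : ℕ} (G : GaussDiagram (m + 2))
    (h1 : G.OneComponent) (h2 : G.Ascending) (x : Fin (m + 2))
    (a b : ℕ) (ha : a = min (G.t x : ℕ) (G.h x : ℕ)) (hb : b = max (G.t x : ℕ) (G.h x : ℕ)) :
    ∃ G0 : GaussDiagram2 (m + 1) (a + (2 * (m + 2) - 1 - b)) (b - a - 1),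
      (∀ i : Fin (m + 1),
        Sum.map Fin.val Fin.val (G0.t i) = smoothPos a b (G.t (x.succAbove i) : ℕ) ∧
        Sum.map Fin.val Fin.val (G0.h i) = smoothPos a b (G.h (x.succAbove i) : ℕ) ∧
        G0.ε i = G.ε (x.succAbove i)) ∧
      G0.OneComponent ∧ G0.Ascending := by
  subst ha hb
  have hab := h1.lo_add_one_lt_hi x
  refine ⟨G.smoothing x hab, fun i => ⟨?_, ?_, rfl⟩, G.smoothing_oneComponent x hab h1,
    G.smoothing_ascending x hab h1 h2⟩
  · exact map_val_smoothIndex hab (G.t_mem_offPair x (x.succAbove_ne i))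
  · exact map_val_smoothIndex hab (G.h_mem_offPair x (x.succAbove_ne i))
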